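/- arXiv:1212.4284 — 2 statements merged into one kernel-verified Lean document; each statement's English description precedes it below -/
import Mathlib

section
/- Let φ be an endomorphism of the free inverse monoid M_A and let φ̄ be the induced endomorphism of the free group F_A (defined by φ̄(σ'(m)) = σ'(φ(m)) where σ': M_A → F_A is the canonical surjection). Then for u ∈ M_A, u ∈ Fix(φ) if and only if u u⁻¹ ∈ Fix(φ) and σ'(u) ∈ Fix(φ̄). -/
def winv {A : Type*} (w : FreeMonoid (A × Bool)) : FreeMonoid (A × Bool) :=
  FreeMonoid.ofList ((FreeMonoid.toList w).reverse.map fun p => (p.1, !p.2))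

def vagner (A : Type*) : Con (FreeMonoid (A × Bool)) :=
  conGen fun x y =>
    (∃ u : FreeMonoid (A × Bool), x = u * winv u * u ∧ y = u) ∨
    (∃ u v : FreeMonoid (A × Bool),
      x = u * winv u * (v * winv v) ∧ y = v * winv v * (u * winv u))

/-!
Endomorphisms of inverse monoids commute with inversion, which gives the forward direction.
Conversely, if `w` and `φ w` have the same image in the free group, Church–Rosser gives a common
reduct `r` of the two words, and each free reduction step multiplies on the left by an
idempotent, so `w = e r` and `φ w = f r` with `e`, `f` idempotent. In an inverse monoid
`e r = (e r)(e r)⁻¹ r`, so for fixed `r` an element `x = e r` is determined by `x x⁻¹`, and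
`φ(w) φ(w)⁻¹ = φ(w w⁻¹) = w w⁻¹`.
-/

/-- Inverse monoids in Wagner's presentation: a monoid with an involution `star` such that
`x x⋆ x = x` and the elements `x x⋆` commute. `vagner A` is the congruence generated by these
laws, so its quotient is the free inverse monoid on `A`. -/
class IsInverseMonoid (M : Type*) [Monoid M] [StarMul M] : Prop where
  mul_star_mul_self (x : M) : x * star x * x = x
  commute_mul_star (x y : M) : Commute (x * star x) (y * star y)

namespace IsInverseMonoid

variable {M N : Type*} [Monoid M] [StarMul M] [IsInverseMonoid M]

theorem star_mul_mul_star (x : M) : star x * x * star x = star x := by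
  simpa using mul_star_mul_self (star x)

theorem isIdempotentElem_mul_star (x : M) : IsIdempotentElem (x * star x) := by
  rw [IsIdempotentElem, ← mul_assoc, mul_star_mul_self]

theorem isIdempotentElem_star_mul (x : M) : IsIdempotentElem (star x * x) := by
  simpa using isIdempotentElem_mul_star (star x)

theorem commute_mul_star_star_mul (x y : M) : Commute (x * star x) (star y * y) := by
  simpa using commute_mul_star x (star y)

theorem star_eq_self_of_isIdempotentElem {e : M} (he : IsIdempotentElem e) : star e = e :=
  calc star e = star e * e * (e * star e) := by
        rw [← mul_assoc, mul_assoc (star e), he.eq, star_mul_mul_star]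
    _ = e * star e * (star e * e) := (commute_mul_star_star_mul e e).symm.eq
    _ = e := by
        rw [← mul_assoc, mul_assoc e, he.star.eq, mul_star_mul_self]

theorem commute_of_isIdempotentElem {e f : M} (he : IsIdempotentElem e)
    (hf : IsIdempotentElem f) : Commute e f := by
  have h := commute_mul_star e f
  rwa [star_eq_self_of_isIdempotentElem he, star_eq_self_of_isIdempotentElem hf, he.eq, hf.eq] at h

theorem isIdempotentElem_mul {e f : M} (he : IsIdempotentElem e) (hf : IsIdempotentElem f) :
    IsIdempotentElem (e * f) :=
  he.mul_of_commute (commute_of_isIdempotentElem he hf) hf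

theorem isIdempotentElem_conj (p : M) {e : M} (he : IsIdempotentElem e) :
    IsIdempotentElem (p * e * star p) := by
  have h := commute_of_isIdempotentElem he (isIdempotentElem_star_mul p)
  calc p * e * star p * (p * e * star p) = p * (e * (star p * p)) * e * star p := by
        simp only [mul_assoc]
    _ = p * e * star p := by
        rw [h.eq, ← mul_assoc, ← mul_assoc, mul_star_mul_self, mul_assoc p, he.eq]

theorem mul_mul_eq_conj_mul (p : M) {e : M} (he : IsIdempotentElem e) (s : M) :
    p * e * s = p * e * star p * (p * s) := by
  have h := commute_of_isIdempotentElem he (isIdempotentElem_star_mul p)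
  calc p * e * s = p * star p * p * e * s := by rw [mul_star_mul_self]
    _ = p * ((star p * p) * e) * s := by simp only [mul_assoc]
    _ = p * e * star p * (p * s) := by rw [← h.eq]; simp only [mul_assoc]

theorem eq_star_mul_mul_of_mul_mul {x s : M} (hs : s * x * s = s) :
    s = star x * x * s := by
  have hsx : IsIdempotentElem (s * x) := by
    rw [IsIdempotentElem, ← mul_assoc, hs]
  calc s = s * (x * star x * x) * s := by rw [mul_star_mul_self, hs]
    _ = s * x * (star x * x) * s := by simp only [mul_assoc]
    _ = star x * x * (s * x * s) := by
        rw [(commute_of_isIdempotentElem hsx (isIdempotentElem_star_mul x)).eq]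
        simp only [mul_assoc]
    _ = star x * x * s := by rw [hs]

theorem eq_star_of_mul_mul {x s : M} (hx : x * s * x = x) (hs : s * x * s = s) :
    s = star x := by
  have hl := eq_star_mul_mul_of_mul_mul hs
  have hr : star s = star (star x) * star x * star s :=
    eq_star_mul_mul_of_mul_mul (by simpa [mul_assoc] using congrArg star hs)
  replace hr : s = s * x * star x := by simpa [mul_assoc] using congrArg star hr
  calc s = star x * x * (s * x * star x) := by rw [← hr, ← hl]
    _ = star x * (x * s * x) * star x := by simp only [mul_assoc]
    _ = star x := by rw [hx, star_mul_mul_star]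

theorem map_star [Monoid N] [StarMul N] [IsInverseMonoid N] (f : M →* N) (x : M) :
    f (star x) = star (f x) :=
  eq_star_of_mul_mul (by rw [← map_mul, ← map_mul, mul_star_mul_self])
    (by rw [← map_mul, ← map_mul, star_mul_mul_star])

theorem mul_eq_mul_star_mul {e : M} (he : IsIdempotentElem e) (z : M) :
    e * z = e * z * star (e * z) * z := by
  rw [star_mul, star_eq_self_of_isIdempotentElem he]
  calc e * z = e * (z * star z * z) := by rw [mul_star_mul_self]
    _ = e * (z * star z) * e * z := by
        rw [mul_assoc e (z * star z), (commute_of_isIdempotentElem (isIdempotentElem_mul_star z)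
          he).eq, ← mul_assoc e e, he.eq]
        simp only [mul_assoc]
    _ = e * z * (star z * e) * z := by simp only [mul_assoc]

theorem eq_of_mul_star_eq {x y z e f : M} (he : IsIdempotentElem e) (hf : IsIdempotentElem f)
    (hx : x = e * z) (hy : y = f * z) (h : x * star x = y * star y) : x = y := by
  rw [hx, hy, mul_eq_mul_star_mul he, mul_eq_mul_star_mul hf, ← hx, ← hy, h]

end IsInverseMonoid

section FreeInverseMonoid

variable {A : Type*}

open IsInverseMonoid

theorem winv_mul (a b : FreeMonoid (A × Bool)) : winv (a * b) = winv b * winv a := by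
  simp [winv, FreeMonoid.toList_mul, ← FreeMonoid.ofList_append]

theorem winv_winv (a : FreeMonoid (A × Bool)) : winv (winv a) = a := by
  simp [winv, Function.comp_def]

theorem winv_of (p : A × Bool) : winv (FreeMonoid.of p) = FreeMonoid.of (p.1, !p.2) := by
  simp [winv]

theorem vagner_winv {a b : FreeMonoid (A × Bool)} (h : vagner A a b) :
    vagner A (winv a) (winv b) := by
  induction h with
  | of x y h =>
    rcases h with ⟨u, rfl, rfl⟩ | ⟨u, v, rfl, rfl⟩
    · exact ConGen.Rel.of _ _ (Or.inl ⟨_, by simp [winv_mul, mul_assoc], rfl⟩)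
    · exact ConGen.Rel.of _ _ (Or.inr ⟨v, u, by simp [winv_mul, winv_winv, mul_assoc],
        by simp [winv_mul, winv_winv, mul_assoc]⟩)
  | refl => exact ConGen.Rel.refl _
  | symm _ ih => exact ConGen.Rel.symm ih
  | trans _ _ ih₁ ih₂ => exact ConGen.Rel.trans ih₁ ih₂
  | mul _ _ ih₁ ih₂ => rw [winv_mul, winv_mul]; exact ConGen.Rel.mul ih₂ ih₁

instance : StarMul (vagner A).Quotient where
  star := Quotient.map' winv fun _ _ => vagner_winv
  star_involutive x := Quotient.inductionOn' x fun w => congrArg _ (winv_winv w)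
  star_mul x y := Quotient.inductionOn₂' x y fun u v => congrArg _ (winv_mul u v)

theorem vagner.star_coe (w : FreeMonoid (A × Bool)) :
    star (w : (vagner A).Quotient) = ↑(winv w) :=
  rfl

instance : IsInverseMonoid (vagner A).Quotient where
  mul_star_mul_self x := Quotient.inductionOn' x fun w =>
    (vagner A).eq.mpr (ConGen.Rel.of _ _ (Or.inl ⟨w, rfl, rfl⟩))
  commute_mul_star x y := Quotient.inductionOn₂' x y fun u v =>
    (vagner A).eq.mpr (ConGen.Rel.of _ _ (Or.inr ⟨u, v, rfl, rfl⟩))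

theorem vagner.exists_idempotent_mul_of_red_step {L₁ L₂ : List (A × Bool)}
    (h : FreeGroup.Red.Step L₁ L₂) :
    ∃ e : (vagner A).Quotient, IsIdempotentElem e ∧
      (↑(FreeMonoid.ofList L₁) : (vagner A).Quotient) = e * ↑(FreeMonoid.ofList L₂) := by
  obtain @⟨P, S, a, b⟩ := h
  set p : (vagner A).Quotient := ↑(FreeMonoid.ofList P)
  set l : (vagner A).Quotient := ↑(FreeMonoid.of (a, b))
  refine ⟨p * (l * star l) * star p, isIdempotentElem_conj p (isIdempotentElem_mul_star l), ?_⟩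
  rw [FreeMonoid.ofList_append, FreeMonoid.ofList_append, Con.coe_mul, Con.coe_mul,
    ← mul_mul_eq_conj_mul p (isIdempotentElem_mul_star l)]
  simp [FreeMonoid.ofList_cons, vagner.star_coe, winv_of, p, l, mul_assoc]

theorem vagner.exists_idempotent_mul_of_red {L₁ L₂ : List (A × Bool)}
    (h : FreeGroup.Red L₁ L₂) :
    ∃ e : (vagner A).Quotient, IsIdempotentElem e ∧
      (↑(FreeMonoid.ofList L₁) : (vagner A).Quotient) = e * ↑(FreeMonoid.ofList L₂) := by
  induction h with
  | refl => exact ⟨1, .one, (one_mul _).symm⟩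
  | tail _ hstep ih =>
    obtain ⟨e, he, hL₁⟩ := ih
    obtain ⟨f, hf, hL⟩ := exists_idempotent_mul_of_red_step hstep
    exact ⟨e * f, isIdempotentElem_mul he hf, by rw [hL₁, hL, mul_assoc]⟩

end FreeInverseMonoid

section MaximalGroupImage

variable {A : Type*}

open IsInverseMonoid

theorem vagner.apply_coe_eq_mk (σ' : (vagner A).Quotient →* FreeGroup A)
    (hσ : ∀ a : A, σ' (↑(FreeMonoid.of ((a, true) : A × Bool))) = FreeGroup.of a ∧
      σ' (↑(FreeMonoid.of ((a, false) : A × Bool))) = (FreeGroup.of a)⁻¹)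
    (w : FreeMonoid (A × Bool)) :
    σ' ↑w = FreeGroup.mk w.toList := by
  induction w with
  | one => exact map_one σ'
  | of p =>
    obtain ⟨a, _ | _⟩ := p
    · exact (hσ a).2.trans FreeGroup.inv_mk
    · exact (hσ a).1
  | mul u v hu hv =>
    rw [Con.coe_mul, map_mul, hu, hv, FreeGroup.mul_mk, FreeMonoid.toList_mul]

theorem vagner.eq_of_apply_eq_of_mul_star_eq (σ' : (vagner A).Quotient →* FreeGroup A)
    (hσ : ∀ a : A, σ' (↑(FreeMonoid.of ((a, true) : A × Bool))) = FreeGroup.of a ∧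
      σ' (↑(FreeMonoid.of ((a, false) : A × Bool))) = (FreeGroup.of a)⁻¹)
    {m n : (vagner A).Quotient} (hσmn : σ' m = σ' n) (hmn : m * star m = n * star n) :
    m = n := by
  induction m using Quotient.inductionOn' with | h u =>
  induction n using Quotient.inductionOn' with | h v =>
  change σ' ↑u = σ' ↑v at hσmn
  rw [apply_coe_eq_mk σ' hσ, apply_coe_eq_mk σ' hσ, FreeGroup.Red.exact] at hσmn
  obtain ⟨L, hu, hv⟩ := hσmn
  obtain ⟨e, he, hue⟩ := exists_idempotent_mul_of_red hu
  obtain ⟨f, hf, hvf⟩ := exists_idempotent_mul_of_red hv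
  rw [FreeMonoid.ofList_toList] at hue hvf
  exact eq_of_mul_star_eq he hf hue hvf hmn

end MaximalGroupImage

theorem fix_iff_idempotent_and_group_fix_general {A : Type*}
    (σ' : (vagner A).Quotient →* FreeGroup A)
    (hσ : ∀ a : A, σ' (↑(FreeMonoid.of ((a, true) : A × Bool))) = FreeGroup.of a ∧
      σ' (↑(FreeMonoid.of ((a, false) : A × Bool))) = (FreeGroup.of a)⁻¹)
    (φ : Monoid.End (vagner A).Quotient) (φb : Monoid.End (FreeGroup A))
    (hcomm : ∀ m : (vagner A).Quotient, σ' (φ m) = φb (σ' m))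
    (w : FreeMonoid (A × Bool)) :
    φ (↑w) = (↑w : (vagner A).Quotient) ↔
      (φ (↑(w * winv w)) = (↑(w * winv w) : (vagner A).Quotient) ∧
        φb (σ' ↑w) = σ' ↑w) := by
  have hφ_star (x : (vagner A).Quotient) : φ (star x) = star (φ x) :=
    IsInverseMonoid.map_star (φ : (vagner A).Quotient →* (vagner A).Quotient) x
  rw [Con.coe_mul, ← vagner.star_coe, map_mul, hφ_star, ← hcomm]
  constructor
  · intro h
    rw [h]
    exact ⟨rfl, rfl⟩
  · rintro ⟨hidem, hgroup⟩
    exact vagner.eq_of_apply_eq_of_mul_star_eq σ' hσ hgroup hidem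

/-- For an endomorphism `φ` of the free inverse monoid `M_A` with induced
endomorphism `φ̄` of the free group `F_A` (via the canonical surjection `σ'`),
an element `u` is fixed by `φ` iff `u u⁻¹` is fixed by `φ` and `σ'(u)` is fixed
by `φ̄`. -/
theorem fix_iff_idempotent_and_group_fix {A : Type*} [Fintype A]
    (σ' : (vagner A).Quotient →* FreeGroup A)
    (hσ : ∀ a : A, σ' (↑(FreeMonoid.of ((a, true) : A × Bool))) = FreeGroup.of a ∧
      σ' (↑(FreeMonoid.of ((a, false) : A × Bool))) = (FreeGroup.of a)⁻¹)
    (φ : Monoid.End (vagner A).Quotient) (φb : Monoid.End (FreeGroup A))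
    (hcomm : ∀ m : (vagner A).Quotient, σ' (φ m) = φb (σ' m))
    (w : FreeMonoid (A × Bool)) :
    φ (↑w) = (↑w : (vagner A).Quotient) ↔
      (φ (↑(w * winv w)) = (↑(w * winv w) : (vagner A).Quotient) ∧
        φb (σ' ↑w) = σ' ↑w) :=
  fix_iff_idempotent_and_group_fix_general σ' hσ φ φb hcomm w
end

section
/- Let M be an inverse monoid, φ an endomorphism of M with Per(φ) = Fix(φ^m) for some m ≥ 1, and v ∈ Per(φ). Then v v⁻¹ · φ(v v⁻¹) · φ²(v v⁻¹) ⋯ φ^{m-1}(v v⁻¹) is a fixed point of φ. -/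
section Aux

variable {M : Type*} [Monoid M] (inv : M → M)
    (hinv : ∀ x : M, x * inv x * x = x ∧ inv x * x * inv x = inv x)
    (huniq : ∀ x y : M, x * y * x = x → y * x * y = y → y = inv x)

include hinv huniq in
lemma aux_idem_mul (e f : M) (he : e * e = e) (hf : f * f = f) :
    (e * f) * (e * f) = e * f := by
  set x := inv (e * f) with hx
  have hx1 : (e * f) * x * (e * f) = e * f := (hinv (e * f)).1
  have hx2 : x * (e * f) * x = x := (hinv (e * f)).2
  set y := f * x * e with hy
  have hyy : y * y = y := by
    have : y * y = f * (x * (e * f) * x) * e := by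
      simp only [hy, mul_assoc]
    rw [this, hx2]
  have hb1 : (e * f) * y * (e * f) = e * f := by
    have : (e * f) * y * (e * f) = (e * (f * f)) * x * ((e * e) * f) := by
      simp only [hy, mul_assoc]
    rw [this, hf, he]; exact hx1
  have hb2 : y * (e * f) * y = y := by
    have : y * (e * f) * y = f * (x * ((e * e) * (f * f)) * x) * e := by
      simp only [hy, mul_assoc]
    rw [this, he, hf, hx2]
  -- y = inv (e*f)
  have hyx : y = inv (e * f) := huniq _ _ hb1 hb2
  -- y idempotent ⇒ inv y = y
  have hyinv : y = inv y := huniq y y (by rw [hyy, hyy]) (by rw [hyy, hyy])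
  -- e*f is an inverse of y
  have hefy : e * f = inv y := huniq y (e * f) hb2 hb1
  have : e * f = y := by rw [hefy, ← hyinv]
  rw [this]; exact hyy

include hinv huniq in
lemma aux_idem_comm (e f : M) (he : e * e = e) (hf : f * f = f) :
    e * f = f * e := by
  have hef : (e * f) * (e * f) = e * f := aux_idem_mul inv hinv huniq e f he hf
  have hfe : (f * e) * (f * e) = f * e := aux_idem_mul inv hinv huniq f e hf he
  have h1 : (e * f) * (f * e) * (e * f) = e * f := by
    have : (e * f) * (f * e) * (e * f) = (e * (f * f)) * ((e * e) * f) := by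
      simp only [mul_assoc]
    rw [this, hf, he]
    have : e * f * (e * f) = e * f := hef
    simpa [mul_assoc] using this
  have h2 : (f * e) * (e * f) * (f * e) = f * e := by
    have : (f * e) * (e * f) * (f * e) = (f * (e * e)) * ((f * f) * e) := by
      simp only [mul_assoc]
    rw [this, he, hf]
    have : f * e * (f * e) = f * e := hfe
    simpa [mul_assoc] using this
  have ha : f * e = inv (e * f) := huniq _ _ h1 h2
  have hb : e * f = inv (e * f) := huniq (e * f) (e * f) (by rw [hef, hef]) (by rw [hef, hef])
  rw [hb, ← ha]

end Aux

/-- In an inverse monoid, if `Per(φ) = Fix(φ^m)` and `v` is periodic, then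
`v v⁻¹ · φ(v v⁻¹) ⋯ φ^{m-1}(v v⁻¹)` is fixed by `φ`. -/
theorem kernel_of_periodic_is_fixed {M : Type*} [Monoid M] (inv : M → M)
    (hinv : ∀ x : M, x * inv x * x = x ∧ inv x * x * inv x = inv x)
    (huniq : ∀ x y : M, x * y * x = x → y * x * y = y → y = inv x)
    (φ : Monoid.End M) (m : ℕ) (hm : 1 ≤ m)
    (hper : {x : M | ∃ n ≥ 1, (φ ^ n) x = x} = {x : M | (φ ^ m) x = x})
    (v : M) (hv : ∃ n ≥ 1, (φ ^ n) v = v) :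
    φ (((List.range m).map fun i => (φ ^ i) (v * inv v)).prod) =
      ((List.range m).map fun i => (φ ^ i) (v * inv v)).prod := by
  -- v is fixed by φ^m
  have hvm : (φ ^ m) v = v := by
    have := Set.ext_iff.mp hper v
    exact this.mp hv
  -- inv v is fixed by φ^m
  have hinvm : (φ ^ m) (inv v) = inv v := by
    symm
    refine (huniq v ((φ ^ m) (inv v)) ?_ ?_).symm ▸ rfl
    · have := congrArg (φ ^ m) (hinv v).1
      simpa [map_mul, hvm] using this
    · have := congrArg (φ ^ m) (hinv v).2
      simpa [map_mul, hvm] using this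
  set e := v * inv v with he
  have hem : (φ ^ m) e = e := by rw [he, map_mul, hvm, hinvm]
  have hee : e * e = e := by
    have : e * e = (v * inv v * v) * inv v := by simp only [he, mul_assoc]
    rw [this, (hinv v).1]
  -- idempotence of φ^i e
  have hidem : ∀ i : ℕ, ((φ ^ i) e) * ((φ ^ i) e) = (φ ^ i) e := fun i => by
    rw [← map_mul, hee]
  obtain ⟨n, rfl⟩ : ∃ n, m = n + 1 := ⟨m - 1, by omega⟩
  set f : ℕ → M := fun i => (φ ^ i) e with hf
  have hshift : ∀ i : ℕ, φ (f i) = f (i + 1) := fun i => by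
    show φ ((φ ^ i) e) = (φ ^ (i + 1)) e
    rw [pow_succ']
    rfl
  rw [map_list_prod, List.map_map]
  have hmapeq : (List.range (n + 1)).map (⇑φ ∘ f) = (List.range (n + 1)).map (fun i => f (i + 1)) := by
    apply List.map_congr_left
    intro i _
    exact hshift i
  rw [hmapeq]
  -- right side: range (n+1) = 0 :: map succ (range n)
  conv_rhs => rw [List.range_succ_eq_map, List.map_cons, List.map_map, List.prod_cons]
  -- left side: range (n+1) = range n ++ [n]
  conv_lhs => rw [List.range_succ, List.map_append, List.prod_append]
  have hlast : f (n + 1) = e := hem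
  have hcomp : (List.range n).map (f ∘ Nat.succ) = (List.range n).map (fun i => f (i + 1)) := rfl
  rw [hcomp]
  simp only [List.map_singleton, List.prod_singleton, hlast]
  have hf0 : f 0 = e := by simp [hf]
  rw [hf0]
  have hc : Commute e (((List.range n).map fun i => f (i + 1)).prod) := by
    apply Commute.list_prod_right
    intro y hy
    obtain ⟨i, _, rfl⟩ := List.mem_map.mp hy
    exact aux_idem_comm inv hinv huniq e (f (i + 1)) hee (hidem (i + 1))
  exact hc.eq.symm
end
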